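/- arXiv:1510.00133 — 4 statements merged into one kernel-verified Lean document; each statement's English description precedes it below -/
import Mathlib

section
/- Let A(x0,x1,x2) = x0·Id + x2·N + x1·V(t,s) be the 3×3 linear matrix where N is the 3×3 matrix with entries N(1,2)=N(2,3)=1 and all other entries 0, and V(t,s) is the 3×3 matrix [[t/2, s, α+(3/4)t²],[0, −t, −s],[−1, 0, t/2]]. If the complex parameters s,t satisfy s² = t³ + αt + β, then det A(x0,x1,x2) = −x1·x2² + x0³ + α·x0·x1² + β·x1³ for all (x0,x1,x2) ∈ ℂ³. -/
open Matrix

/-- The nilpotent matrix `N` with `N(1,2) = N(2,3) = 1` and all other entries `0`. -/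
noncomputable def N3 : Matrix (Fin 3) (Fin 3) ℂ :=
  !![0, 1, 0; 0, 0, 1; 0, 0, 0]

/-- The matrix `V(t,s)` from Vinnikov's determinantal representations. -/
noncomputable def V (α t s : ℂ) : Matrix (Fin 3) (Fin 3) ℂ :=
  !![t/2, s, α + (3/4) * t^2; 0, -t, -s; -1, 0, t/2]

theorem stmt_0 (α β s t : ℂ) (h : s^2 = t^3 + α * t + β) (x0 x1 x2 : ℂ) :
    (x0 • (1 : Matrix (Fin 3) (Fin 3) ℂ) + x2 • N3 + x1 • V α t s).det =
      -x1 * x2^2 + x0^3 + α * x0 * x1^2 + β * x1^3 := by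
  simp [N3, V, Matrix.det_fin_three, Matrix.one_apply, Matrix.vecHead, Matrix.vecTail]
  linear_combination x1^3 * h
end

section
/- Let A0, A1, A2 be complex 3×3 matrices such that det(x0·A0 + x1·A1 + x2·A2) = F(x0,x1,x2) for all (x0,x1,x2) ∈ ℂ³, where F(x0,x1,x2) = −x1·x2² + x0³ + α·x0·x1² + β·x1³. Then there exist invertible complex 3×3 matrices X, Y and complex numbers t, s with s² = t³ + αt + β such that X·(x0·A0 + x1·A1 + x2·A2)·Y = x0·Id + x2·N + x1·V(t,s) for all (x0,x1,x2), where N is the 3×3 matrix with entries N(1,2)=N(2,3)=1 and all other entries 0 and V(t,s) = [[t/2, s, α+(3/4)t²],[0, −t, −s],[−1, 0, t/2]]. -/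
open Matrix

private lemma m3ext {M M' : Matrix (Fin 3) (Fin 3) ℂ}
    (h00 : M 0 0 = M' 0 0) (h01 : M 0 1 = M' 0 1) (h02 : M 0 2 = M' 0 2)
    (h10 : M 1 0 = M' 1 0) (h11 : M 1 1 = M' 1 1) (h12 : M 1 2 = M' 1 2)
    (h20 : M 2 0 = M' 2 0) (h21 : M 2 1 = M' 2 1) (h22 : M 2 2 = M' 2 2) : M = M' := by
  ext i j
  fin_cases i <;> fin_cases j
  exacts [h00, h01, h02, h10, h11, h12, h20, h21, h22]

set_option maxHeartbeats 1600000 in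
theorem stmt_1 (α β : ℂ) (A0 A1 A2 : Matrix (Fin 3) (Fin 3) ℂ)
    (h : ∀ x0 x1 x2 : ℂ, (x0 • A0 + x1 • A1 + x2 • A2).det =
        -x1 * x2^2 + x0^3 + α * x0 * x1^2 + β * x1^3) :
    ∃ (X Y : Matrix (Fin 3) (Fin 3) ℂ) (t s : ℂ),
      IsUnit X ∧ IsUnit Y ∧ s^2 = t^3 + α * t + β ∧
      ∀ x0 x1 x2 : ℂ, X * (x0 • A0 + x1 • A1 + x2 • A2) * Y =
        x0 • (1 : Matrix (Fin 3) (Fin 3) ℂ) + x2 • N3 + x1 • V α t s := by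
  have hA0d : A0.det = 1 := by
    have := h 1 0 0; simpa using this
  have hA0u : IsUnit A0.det := by rw [hA0d]; exact isUnit_one
  set C1 := A0⁻¹ * A1 with hC1def
  set C2 := A0⁻¹ * A2 with hC2def
  have hC : ∀ x0 x1 x2 : ℂ, (x0 • (1:Matrix (Fin 3) (Fin 3) ℂ) + x1 • C1 + x2 • C2).det =
      -x1 * x2^2 + x0^3 + α * x0 * x1^2 + β * x1^3 := by
    intro x0 x1 x2
    have key : x0 • (1:Matrix (Fin 3) (Fin 3) ℂ) + x1 • C1 + x2 • C2
        = A0⁻¹ * (x0 • A0 + x1 • A1 + x2 • A2) := by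
      rw [Matrix.mul_add, Matrix.mul_add, Matrix.mul_smul, Matrix.mul_smul, Matrix.mul_smul,
        Matrix.nonsing_inv_mul _ hA0u, hC1def, hC2def]
    rw [key, Matrix.det_mul, Matrix.det_nonsing_inv, hA0d, h x0 x1 x2]
    simp
  -- entrywise form of hC
  have e : ∀ x0 x1 x2 : ℂ,
      (x0 + x1 * C1 0 0 + x2 * C2 0 0) * (x0 + x1 * C1 1 1 + x2 * C2 1 1) * (x0 + x1 * C1 2 2 + x2 * C2 2 2)
      - (x0 + x1 * C1 0 0 + x2 * C2 0 0) * (x1 * C1 1 2 + x2 * C2 1 2) * (x1 * C1 2 1 + x2 * C2 2 1)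
      - (x1 * C1 0 1 + x2 * C2 0 1) * (x1 * C1 1 0 + x2 * C2 1 0) * (x0 + x1 * C1 2 2 + x2 * C2 2 2)
      + (x1 * C1 0 1 + x2 * C2 0 1) * (x1 * C1 1 2 + x2 * C2 1 2) * (x1 * C1 2 0 + x2 * C2 2 0)
      + (x1 * C1 0 2 + x2 * C2 0 2) * (x1 * C1 1 0 + x2 * C2 1 0) * (x1 * C1 2 1 + x2 * C2 2 1)
      - (x1 * C1 0 2 + x2 * C2 0 2) * (x0 + x1 * C1 1 1 + x2 * C2 1 1) * (x1 * C1 2 0 + x2 * C2 2 0)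
      = -x1 * x2^2 + x0^3 + α * x0 * x1^2 + β * x1^3 := by
    intro x0 x1 x2
    have := hC x0 x1 x2
    simp only [Matrix.det_fin_three, Matrix.add_apply, Matrix.smul_apply, Matrix.one_apply,
      smul_eq_mul, Fin.reduceEq, if_true, if_false, mul_zero, zero_mul, add_zero, zero_add,
      mul_one] at this
    linear_combination this
  have hTr : C2 0 0 + C2 1 1 + C2 2 2 = 0 := by
    linear_combination (e 1 0 1 - e 1 0 (-1))/2 - e 0 0 1
  have hE2 : (C2 0 0 * C2 1 1 - C2 0 1 * C2 1 0) + (C2 0 0 * C2 2 2 - C2 0 2 * C2 2 0)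
      + (C2 1 1 * C2 2 2 - C2 1 2 * C2 2 1) = 0 := by
    linear_combination (e 1 0 1 + e 1 0 (-1))/2 - e 1 0 0
  have hDet : C2 0 0 * C2 1 1 * C2 2 2 - C2 0 0 * C2 1 2 * C2 2 1 - C2 0 1 * C2 1 0 * C2 2 2
      + C2 0 1 * C2 1 2 * C2 2 0 + C2 0 2 * C2 1 0 * C2 2 1 - C2 0 2 * C2 1 1 * C2 2 0 = 0 := by
    linear_combination e 0 0 1
  have z00 : (C2 * C2 * C2) 0 0 = 0 := by
    simp only [Matrix.mul_apply, Fin.sum_univ_three]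
    linear_combination (C2 0 0 * C2 0 0 + C2 0 1 * C2 1 0 + C2 0 2 * C2 2 0) * hTr - C2 0 0 * hE2 + hDet
  have z01 : (C2 * C2 * C2) 0 1 = 0 := by
    simp only [Matrix.mul_apply, Fin.sum_univ_three]
    linear_combination (C2 0 0 * C2 0 1 + C2 0 1 * C2 1 1 + C2 0 2 * C2 2 1) * hTr - C2 0 1 * hE2
  have z02 : (C2 * C2 * C2) 0 2 = 0 := by
    simp only [Matrix.mul_apply, Fin.sum_univ_three]
    linear_combination (C2 0 0 * C2 0 2 + C2 0 1 * C2 1 2 + C2 0 2 * C2 2 2) * hTr - C2 0 2 * hE2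
  have z10 : (C2 * C2 * C2) 1 0 = 0 := by
    simp only [Matrix.mul_apply, Fin.sum_univ_three]
    linear_combination (C2 1 0 * C2 0 0 + C2 1 1 * C2 1 0 + C2 1 2 * C2 2 0) * hTr - C2 1 0 * hE2
  have z11 : (C2 * C2 * C2) 1 1 = 0 := by
    simp only [Matrix.mul_apply, Fin.sum_univ_three]
    linear_combination (C2 1 0 * C2 0 1 + C2 1 1 * C2 1 1 + C2 1 2 * C2 2 1) * hTr - C2 1 1 * hE2 + hDet
  have z12 : (C2 * C2 * C2) 1 2 = 0 := by
    simp only [Matrix.mul_apply, Fin.sum_univ_three]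
    linear_combination (C2 1 0 * C2 0 2 + C2 1 1 * C2 1 2 + C2 1 2 * C2 2 2) * hTr - C2 1 2 * hE2
  have z20 : (C2 * C2 * C2) 2 0 = 0 := by
    simp only [Matrix.mul_apply, Fin.sum_univ_three]
    linear_combination (C2 2 0 * C2 0 0 + C2 2 1 * C2 1 0 + C2 2 2 * C2 2 0) * hTr - C2 2 0 * hE2
  have z21 : (C2 * C2 * C2) 2 1 = 0 := by
    simp only [Matrix.mul_apply, Fin.sum_univ_three]
    linear_combination (C2 2 0 * C2 0 1 + C2 2 1 * C2 1 1 + C2 2 2 * C2 2 1) * hTr - C2 2 1 * hE2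
  have z22 : (C2 * C2 * C2) 2 2 = 0 := by
    simp only [Matrix.mul_apply, Fin.sum_univ_three]
    linear_combination (C2 2 0 * C2 0 2 + C2 2 1 * C2 1 2 + C2 2 2 * C2 2 2) * hTr - C2 2 2 * hE2 + hDet
  have hCube : C2 * C2 * C2 = 0 := by
    refine m3ext ?_ ?_ ?_ ?_ ?_ ?_ ?_ ?_ ?_ <;>
      simp only [Matrix.zero_apply, z00, z01, z02, z10, z11, z12, z20, z21, z22]
  have hT : Matrix.trace (C2 * C2 * C1) = -1 := by
    have expand : Matrix.trace (C2 * C2 * C1) =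
        (C2 0 0 * C2 0 0 + C2 0 1 * C2 1 0 + C2 0 2 * C2 2 0) * C1 0 0
      + (C2 0 0 * C2 0 1 + C2 0 1 * C2 1 1 + C2 0 2 * C2 2 1) * C1 1 0
      + (C2 0 0 * C2 0 2 + C2 0 1 * C2 1 2 + C2 0 2 * C2 2 2) * C1 2 0
      + (C2 1 0 * C2 0 0 + C2 1 1 * C2 1 0 + C2 1 2 * C2 2 0) * C1 0 1
      + (C2 1 0 * C2 0 1 + C2 1 1 * C2 1 1 + C2 1 2 * C2 2 1) * C1 1 1
      + (C2 1 0 * C2 0 2 + C2 1 1 * C2 1 2 + C2 1 2 * C2 2 2) * C1 2 1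
      + (C2 2 0 * C2 0 0 + C2 2 1 * C2 1 0 + C2 2 2 * C2 2 0) * C1 0 2
      + (C2 2 0 * C2 0 1 + C2 2 1 * C2 1 1 + C2 2 2 * C2 2 1) * C1 1 2
      + (C2 2 0 * C2 0 2 + C2 2 1 * C2 1 2 + C2 2 2 * C2 2 2) * C1 2 2 := by
      simp only [Matrix.trace_fin_three, Matrix.mul_apply, Fin.sum_univ_three]; ring
    rw [expand]
    linear_combination (e 0 1 1 + e 0 1 (-1))/2 - e 0 1 0
      + (C2 0 0 * C1 0 0 + C2 0 1 * C1 1 0 + C2 0 2 * C1 2 0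
       + C2 1 0 * C1 0 1 + C2 1 1 * C1 1 1 + C2 1 2 * C1 2 1
       + C2 2 0 * C1 0 2 + C2 2 1 * C1 1 2 + C2 2 2 * C1 2 2) * hTr
      - (C1 0 0 + C1 1 1 + C1 2 2) * hE2
  have hsqne : C2 * C2 ≠ 0 := by
    intro h0
    rw [h0, Matrix.zero_mul, Matrix.trace_zero] at hT
    exact zero_ne_one (by linear_combination -hT : (0:ℂ) = 1)
  obtain ⟨i0, j0, hij⟩ : ∃ i j, (C2 * C2) i j ≠ 0 := by
    by_contra hcon
    push_neg at hcon
    exact hsqne (by ext i j; simpa using hcon i j)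
  set v : Fin 3 → ℂ := Pi.single j0 1 with hvdef
  set u1 : Fin 3 → ℂ := C2.mulVec v with hu1def
  set u2 : Fin 3 → ℂ := C2.mulVec u1 with hu2def
  have hu2alt : u2 = (C2 * C2).mulVec v := by
    rw [hu2def, hu1def, Matrix.mulVec_mulVec]
  have hu2i0 : u2 i0 ≠ 0 := by
    have : u2 i0 = (C2 * C2) i0 j0 := by
      rw [hu2alt, hvdef, Matrix.mulVec_single]
      simp
    rw [this]; exact hij
  have hu3 : C2.mulVec u2 = 0 := by
    rw [hu2alt, Matrix.mulVec_mulVec, ← Matrix.mul_assoc, hCube, Matrix.zero_mulVec]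
  set P : Matrix (Fin 3) (Fin 3) ℂ := Matrix.of fun i j => ![u2 i, u1 i, v i] j with hPdef
  have hPmv : ∀ z : Fin 3 → ℂ, ∀ i, (P.mulVec z) i = u2 i * z 0 + u1 i * z 1 + v i * z 2 := by
    intro z i
    simp [hPdef, Matrix.mulVec, dotProduct, Fin.sum_univ_three]
  have hc0 : ∀ a, C2 a 0 * u2 0 + C2 a 1 * u2 1 + C2 a 2 * u2 2 = 0 := by
    intro a
    have := congrFun hu3 a
    simpa [Matrix.mulVec, dotProduct, Fin.sum_univ_three] using this
  have hc1 : ∀ a, C2 a 0 * u1 0 + C2 a 1 * u1 1 + C2 a 2 * u1 2 = u2 a := by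
    intro a
    have h2 : u2 a = (C2 *ᵥ u1) a := by rw [hu2def]
    simp only [Matrix.mulVec, dotProduct, Fin.sum_univ_three] at h2
    linear_combination -h2
  have hc2 : ∀ a, C2 a 0 * v 0 + C2 a 1 * v 1 + C2 a 2 * v 2 = u1 a := by
    intro a
    have h2 : u1 a = (C2 *ᵥ v) a := by rw [hu1def]
    simp only [Matrix.mulVec, dotProduct, Fin.sum_univ_three] at h2
    linear_combination -h2
  have hCP : C2 * P = P * N3 := by
    refine m3ext ?_ ?_ ?_ ?_ ?_ ?_ ?_ ?_ ?_ <;>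
      simp only [Matrix.mul_apply, Fin.sum_univ_three, hPdef, N3, Matrix.of_apply,
        Matrix.cons_val', Matrix.cons_val_zero, Matrix.cons_val_one, Matrix.head_cons,
        Matrix.empty_val', Matrix.cons_val_fin_one, Matrix.cons_val_two, Matrix.tail_cons,
        Matrix.head_fin_const]
    · linear_combination hc0 0
    · linear_combination hc1 0
    · linear_combination hc2 0
    · linear_combination hc0 1
    · linear_combination hc1 1
    · linear_combination hc2 1
    · linear_combination hc0 2
    · linear_combination hc1 2
    · linear_combination hc2 2
  have hN3mv : ∀ w : Fin 3 → ℂ, N3.mulVec w = ![w 1, w 2, 0] := by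
    intro w
    funext k
    fin_cases k <;> simp [N3, Matrix.mulVec, dotProduct, Fin.sum_univ_three]
  have hPu : IsUnit P.det := by
    rw [isUnit_iff_ne_zero]
    intro hdet0
    obtain ⟨w, hw0, hw⟩ := (Matrix.exists_mulVec_eq_zero_iff).mpr hdet0
    have key : ∀ z : Fin 3 → ℂ, P.mulVec z = 0 → ∀ i, u2 i * z 0 + u1 i * z 1 + v i * z 2 = 0 := by
      intro z hz i
      rw [← hPmv z i, hz]; rfl
    have hW := key w hw
    have hw2 : P.mulVec (N3.mulVec w) = 0 := by
      rw [Matrix.mulVec_mulVec, ← hCP, ← Matrix.mulVec_mulVec, hw, Matrix.mulVec_zero]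
    have hW2 := key _ hw2
    have hw3 : P.mulVec (N3.mulVec (N3.mulVec w)) = 0 := by
      rw [Matrix.mulVec_mulVec, ← hCP, ← Matrix.mulVec_mulVec, hw2, Matrix.mulVec_zero]
    have hW3 := key _ hw3
    rw [hN3mv] at hW2
    rw [hN3mv, hN3mv] at hW3
    simp only [Matrix.cons_val_zero, Matrix.cons_val_one, Matrix.head_cons,
      Matrix.cons_val_two, Matrix.tail_cons] at hW2 hW3
    have e3 := hW3 i0
    have w2z : w 2 = 0 := by
      rcases mul_eq_zero.mp (by linear_combination e3 : u2 i0 * w 2 = 0) with hh | hh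
      · exact absurd hh hu2i0
      · exact hh
    have e2 := hW2 i0
    rw [w2z] at e2
    have w1z : w 1 = 0 := by
      rcases mul_eq_zero.mp (by linear_combination e2 : u2 i0 * w 1 = 0) with hh | hh
      · exact absurd hh hu2i0
      · exact hh
    have e1 := hW i0
    rw [w2z, w1z] at e1
    have w0z : w 0 = 0 := by
      rcases mul_eq_zero.mp (by linear_combination e1 : u2 i0 * w 0 = 0) with hh | hh
      · exact absurd hh hu2i0
      · exact hh
    apply hw0
    funext k
    fin_cases k
    exacts [w0z, w1z, w2z]
  set B : Matrix (Fin 3) (Fin 3) ℂ := P⁻¹ * C1 * P with hBdef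
  have hNP : P⁻¹ * C2 * P = N3 := by
    rw [Matrix.mul_assoc, hCP, ← Matrix.mul_assoc, Matrix.nonsing_inv_mul _ hPu, Matrix.one_mul]
  have hB : ∀ x0 x1 x2 : ℂ, (x0 • (1:Matrix (Fin 3) (Fin 3) ℂ) + x1 • B + x2 • N3).det =
      -x1 * x2^2 + x0^3 + α * x0 * x1^2 + β * x1^3 := by
    intro x0 x1 x2
    have key : x0 • (1:Matrix (Fin 3) (Fin 3) ℂ) + x1 • B + x2 • N3
        = P⁻¹ * (x0 • (1:Matrix (Fin 3) (Fin 3) ℂ) + x1 • C1 + x2 • C2) * P := by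
      rw [hBdef, ← hNP]
      rw [Matrix.mul_add, Matrix.mul_add, Matrix.add_mul, Matrix.add_mul]
      rw [Matrix.mul_smul, Matrix.mul_smul, Matrix.mul_smul,
        Matrix.smul_mul, Matrix.smul_mul, Matrix.smul_mul]
      rw [Matrix.mul_one, Matrix.nonsing_inv_mul _ hPu, Matrix.mul_assoc, Matrix.mul_assoc]
    rw [key, Matrix.det_mul, Matrix.det_mul, Matrix.det_nonsing_inv, hC x0 x1 x2]
    rw [mul_comm, ← mul_assoc, Ring.mul_inverse_cancel _ hPu, one_mul]
  have eB : ∀ x0 x1 x2 : ℂ,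
      (x0 + x1 * B 0 0) * (x0 + x1 * B 1 1) * (x0 + x1 * B 2 2)
      - (x0 + x1 * B 0 0) * (x1 * B 1 2 + x2) * (x1 * B 2 1)
      - (x1 * B 0 1 + x2) * (x1 * B 1 0) * (x0 + x1 * B 2 2)
      + (x1 * B 0 1 + x2) * (x1 * B 1 2 + x2) * (x1 * B 2 0)
      + (x1 * B 0 2) * (x1 * B 1 0) * (x1 * B 2 1)
      - (x1 * B 0 2) * (x0 + x1 * B 1 1) * (x1 * B 2 0)
      = -x1 * x2^2 + x0^3 + α * x0 * x1^2 + β * x1^3 := by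
    intro x0 x1 x2
    have := hB x0 x1 x2
    simp only [Matrix.det_fin_three, Matrix.add_apply, Matrix.smul_apply, Matrix.one_apply,
      N3, Matrix.cons_val', Matrix.cons_val_zero, Matrix.cons_val_one, Matrix.head_cons,
      Matrix.empty_val', Matrix.cons_val_fin_one, Matrix.cons_val_two, Matrix.tail_cons,
      Matrix.head_fin_const, Matrix.of_apply,
      smul_eq_mul, Fin.reduceEq, if_true, if_false, mul_zero, zero_mul, add_zero, zero_add,
      mul_one] at this
    linear_combination this
  have hb20 : B 2 0 = -1 := by
    linear_combination (eB 0 1 1 + eB 0 1 (-1))/2 - eB 0 1 0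
  have hb21 : B 2 1 = -B 1 0 := by
    linear_combination (-1/8 : ℂ) * (eB 1 1 1 - eB 1 1 (-1) - eB 1 (-1) 1 + eB 1 (-1) (-1)
      - eB (-1) 1 1 + eB (-1) 1 (-1) + eB (-1) (-1) 1 - eB (-1) (-1) (-1))
  have hb00 : B 0 0 = -B 1 1 - B 2 2 := by
    linear_combination (eB 1 1 0 - eB 1 (-1) 0)/2 - eB 0 1 0
  have hb12 : B 1 2 = -B 0 1 - B 1 0 * B 2 2 - (B 1 1 + B 2 2) * B 1 0 := by
    linear_combination -((eB 0 1 1 - eB 0 1 (-1))/2) + (B 1 2 + B 0 1) * hb20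
      + B 1 0 * hb00 - B 0 0 * hb21
  have hAl : (B 0 0 * B 1 1 - B 0 1 * B 1 0) + (B 0 0 * B 2 2 - B 0 2 * B 2 0)
      + (B 1 1 * B 2 2 - B 1 2 * B 2 1) = α := by
    linear_combination (eB 1 1 0 + eB 1 (-1) 0)/2 - eB 1 0 0
  have hBe : B 0 0 * B 1 1 * B 2 2 - B 0 0 * B 1 2 * B 2 1 - B 0 1 * B 1 0 * B 2 2
      + B 0 1 * B 1 2 * B 2 0 + B 0 2 * B 1 0 * B 2 1 - B 0 2 * B 1 1 * B 2 0 = β := by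
    linear_combination eB 0 1 0
  rw [hb20, hb21, hb00, hb12] at hAl hBe
  -- normal form data
  set t : ℂ := B 1 0 ^ 2 - B 1 1 with htdef
  set s : ℂ := B 0 1 + B 1 0 * B 2 2 + 2 * (B 1 0 * B 1 1) - B 1 0 ^ 3 with hsdef
  have hs2 : s ^ 2 = t ^ 3 + α * t + β := by
    rw [htdef, hsdef]
    linear_combination (B 1 0 ^ 2 - B 1 1) * hAl + hBe
  set Xp : Matrix (Fin 3) (Fin 3) ℂ :=
    !![1, B 1 0, (B 1 0 ^ 2 - B 1 1)/2 - B 2 2; 0, 1, B 1 0; 0, 0, 1] with hXpdef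
  set Xq : Matrix (Fin 3) (Fin 3) ℂ :=
    !![1, -B 1 0, B 1 0 ^ 2 - ((B 1 0 ^ 2 - B 1 1)/2 - B 2 2); 0, 1, -B 1 0; 0, 0, 1] with hXqdef
  have hXpXq : Xp * Xq = 1 := by
    refine m3ext ?_ ?_ ?_ ?_ ?_ ?_ ?_ ?_ ?_ <;>
      simp only [hXpdef, hXqdef, Matrix.mul_apply, Fin.sum_univ_three, Matrix.one_apply,
        Matrix.cons_val', Matrix.cons_val_zero, Matrix.cons_val_one, Matrix.head_cons,
        Matrix.empty_val', Matrix.cons_val_fin_one, Matrix.cons_val_two, Matrix.tail_cons,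
        Matrix.head_fin_const, Matrix.of_apply, Fin.reduceEq, if_true, if_false] <;>
      ring
  have hXqXp : Xq * Xp = 1 := by
    refine m3ext ?_ ?_ ?_ ?_ ?_ ?_ ?_ ?_ ?_ <;>
      simp only [hXpdef, hXqdef, Matrix.mul_apply, Fin.sum_univ_three, Matrix.one_apply,
        Matrix.cons_val', Matrix.cons_val_zero, Matrix.cons_val_one, Matrix.head_cons,
        Matrix.empty_val', Matrix.cons_val_fin_one, Matrix.cons_val_two, Matrix.tail_cons,
        Matrix.head_fin_const, Matrix.of_apply, Fin.reduceEq, if_true, if_false] <;>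
      ring
  have hXN : Xp * N3 = N3 * Xp := by
    refine m3ext ?_ ?_ ?_ ?_ ?_ ?_ ?_ ?_ ?_ <;>
      simp only [hXpdef, N3, Matrix.mul_apply, Fin.sum_univ_three,
        Matrix.cons_val', Matrix.cons_val_zero, Matrix.cons_val_one, Matrix.head_cons,
        Matrix.empty_val', Matrix.cons_val_fin_one, Matrix.cons_val_two, Matrix.tail_cons,
        Matrix.head_fin_const, Matrix.of_apply] <;>
      ring
  have hV : Xp * B * Xq = V α t s := by
    refine m3ext ?_ ?_ ?_ ?_ ?_ ?_ ?_ ?_ ?_ <;>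
      simp only [hXpdef, hXqdef, V, htdef, hsdef, Matrix.mul_apply, Fin.sum_univ_three,
        Matrix.cons_val', Matrix.cons_val_zero, Matrix.cons_val_one, Matrix.head_cons,
        Matrix.empty_val', Matrix.cons_val_fin_one, Matrix.cons_val_two, Matrix.tail_cons,
        Matrix.head_fin_const, Matrix.of_apply] <;>
      rw [hb20, hb21, hb00, hb12]
    · ring
    · ring
    · linear_combination hAl
    · ring
    · ring
    · ring
    · ring
    · ring
    · ring
  set X : Matrix (Fin 3) (Fin 3) ℂ := Xp * (P⁻¹ * A0⁻¹) with hXdef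
  set Y : Matrix (Fin 3) (Fin 3) ℂ := P * Xq with hYdef
  have hXpu : IsUnit Xp := isUnit_iff_exists.mpr ⟨Xq, hXpXq, hXqXp⟩
  have hXqu : IsUnit Xq := isUnit_iff_exists.mpr ⟨Xp, hXqXp, hXpXq⟩
  have hPunit : IsUnit P := (Matrix.isUnit_iff_isUnit_det P).mpr hPu
  have hA0unit : IsUnit A0 := (Matrix.isUnit_iff_isUnit_det A0).mpr hA0u
  have hXu : IsUnit X := by
    rw [hXdef]
    exact hXpu.mul ((Matrix.isUnit_nonsing_inv_iff.mpr hPunit).mul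
      (Matrix.isUnit_nonsing_inv_iff.mpr hA0unit))
  have hYu : IsUnit Y := hPunit.mul hXqu
  have f0 : X * A0 * Y = 1 := by
    rw [hXdef, hYdef]
    simp only [Matrix.mul_assoc]
    rw [Matrix.nonsing_inv_mul_cancel_left _ _ hA0u, Matrix.nonsing_inv_mul_cancel_left _ _ hPu,
      hXpXq]
  have f1 : X * A1 * Y = V α t s := by
    rw [hXdef, hYdef, ← hV, hBdef, hC1def]
    simp only [Matrix.mul_assoc]
  have f2 : X * A2 * Y = N3 := by
    have key : X * A2 * Y = Xp * (P⁻¹ * C2 * P) * Xq := by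
      rw [hXdef, hYdef, hC2def]
      simp only [Matrix.mul_assoc]
    rw [key, hNP, hXN, Matrix.mul_assoc, hXpXq, Matrix.mul_one]
  refine ⟨X, Y, t, s, hXu, hYu, hs2, ?_⟩
  intro x0 x1 x2
  have expand : X * (x0 • A0 + x1 • A1 + x2 • A2) * Y
      = x0 • (X * A0 * Y) + x1 • (X * A1 * Y) + x2 • (X * A2 * Y) := by
    rw [Matrix.mul_add, Matrix.mul_add, Matrix.add_mul, Matrix.add_mul,
      Matrix.mul_smul, Matrix.mul_smul, Matrix.mul_smul,
      Matrix.smul_mul, Matrix.smul_mul, Matrix.smul_mul]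
  rw [expand, f0, f1, f2]
  abel
end

section
/- Let A0, A1, A2 be complex 3×3 matrices such that det(x0·A0 + x1·A1 + x2·A2) = −x1·x2² + x0³ + α·x0·x1² + β·x1³ for all (x0,x1,x2) ∈ ℂ³. Then A0 is invertible, and the matrix M = A0⁻¹·A2 is nilpotent of order exactly 3, that is M³ = 0 and M² ≠ 0. -/
open Matrix

lemma det3_expand (M : Matrix (Fin 3) (Fin 3) ℂ) (y : ℂ) :
    (1 + y • M).det = 1 + trace M * y + (((trace M)^2 - trace (M*M))/2) * y^2 + M.det * y^3 := by
  simp [Matrix.det_fin_three, Matrix.trace_fin_three, Matrix.mul_apply, Fin.sum_univ_three,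
    Matrix.one_apply]
  ring

lemma cayley3 (M : Matrix (Fin 3) (Fin 3) ℂ) :
    M^3 = trace M • M^2 - (((trace M)^2 - trace (M*M))/2) • M + M.det • 1 := by
  ext i j
  simp [pow_succ, Matrix.det_fin_three, Matrix.trace_fin_three, Matrix.mul_apply,
    Fin.sum_univ_three, Matrix.one_apply]
  fin_cases i <;> fin_cases j <;> simp <;> ring

lemma c2_eq (M N : Matrix (Fin 3) (Fin 3) ℂ) :
    (N + M).det + (N - M).det - 2 * N.det =
      2 * (trace (M*M*N) - trace M * trace (M*N)
        + (((trace M)^2 - trace (M*M))/2) * trace N) := by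
  simp [Matrix.det_fin_three, Matrix.trace_fin_three, Matrix.mul_apply, Fin.sum_univ_three]
  ring

theorem stmt_2 (α β : ℂ) (A0 A1 A2 : Matrix (Fin 3) (Fin 3) ℂ)
    (h : ∀ x0 x1 x2 : ℂ, (x0 • A0 + x1 • A1 + x2 • A2).det =
        -x1 * x2^2 + x0^3 + α * x0 * x1^2 + β * x1^3) :
    IsUnit A0 ∧ (A0⁻¹ * A2)^3 = 0 ∧ (A0⁻¹ * A2)^2 ≠ 0 := by
  have hdet : A0.det = 1 := by have := h 1 0 0; simpa using this
  have hu : IsUnit A0 := by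
    rw [Matrix.isUnit_iff_isUnit_det, hdet]; exact isUnit_one
  have hud : IsUnit A0.det := by rw [hdet]; exact isUnit_one
  have hinv : A0⁻¹ * A0 = 1 := Matrix.nonsing_inv_mul _ hud
  have hdetinv : A0⁻¹.det = 1 := by
    rw [Matrix.det_nonsing_inv, hdet, Ring.inverse_one]
  set M := A0⁻¹ * A2 with hM
  set N := A0⁻¹ * A1 with hN
  -- key identity 1
  have key : ∀ y : ℂ, (1 + y • M).det = 1 := by
    intro y
    have h1 := h 1 0 y
    have e : (1 : Matrix (Fin 3) (Fin 3) ℂ) + y • M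
        = A0⁻¹ * ((1:ℂ) • A0 + (0:ℂ) • A1 + y • A2) := by
      rw [zero_smul, add_zero, one_smul, mul_add, mul_smul_comm, hinv]
    rw [e, Matrix.det_mul, hdetinv, h1]; ring
  -- key identity 2
  have keyN : ∀ y : ℂ, (N + y • M).det = -y^2 + β := by
    intro y
    have h1 := h 0 1 y
    have e : N + y • M = A0⁻¹ * ((0:ℂ) • A0 + (1:ℂ) • A1 + y • A2) := by
      rw [zero_smul, zero_add, one_smul, mul_add, mul_smul_comm]
    rw [e, Matrix.det_mul, hdetinv, h1]; ring
  -- extract invariants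
  have e1 := (det3_expand M 1).symm.trans (key 1)
  have e2 := (det3_expand M (-1)).symm.trans (key (-1))
  have e3 := (det3_expand M 2).symm.trans (key 2)
  have hs : ((trace M)^2 - trace (M*M))/2 = 0 := by linear_combination (e1 + e2) / 2
  have hd : M.det = 0 := by linear_combination e3/6 - e1/3 - hs/3
  have ht : trace M = 0 := by linear_combination e1 - hs - hd
  have hM3 : M^3 = 0 := by
    rw [cayley3 M, hs, ht, hd]; simp
  refine ⟨hu, hM3, ?_⟩
  intro h2
  have hMM : M * M = 0 := by rw [← pow_two]; exact h2
  have c1 := keyN 1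
  have c2 := keyN (-1)
  have c0 := keyN 0
  rw [one_smul] at c1
  rw [zero_smul, add_zero] at c0
  have c2' : (N - M).det = -1 + β := by
    rw [sub_eq_add_neg, ← neg_one_smul ℂ M]; exact c2.trans (by ring)
  have hid := c2_eq M N
  rw [hs, ht, hMM] at hid
  simp only [Matrix.zero_mul, Matrix.trace_zero, zero_mul, mul_zero] at hid
  rw [c1, c2', c0] at hid
  have : (-2:ℂ) = 0 := by linear_combination hid
  norm_num at this
end

section
/- Let λ ∈ ℂ with λ ≠ 0, λ ≠ 1, and let A_x, A_y, A_z be skew-symmetric complex 6×6 matrices such that det(x·A_x + y·A_y + z·A_z) = (y·z² − x·(x−y)·(x−λy))² for all (x,y,z) ∈ ℂ³. Then A_x is invertible and M = A_x⁻¹·A_z is nilpotent with M³ = 0 and M² ≠ 0. -/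
set_option maxRecDepth 40000
set_option maxHeartbeats 1000000

open Matrix Polynomial

section Helpers

open LinearMap Module

lemma alt_nondeg_even :
    ∀ (n : ℕ) (V : Type) [AddCommGroup V] [Module ℂ V] [FiniteDimensional ℂ V],
      Module.finrank ℂ V = n →
      ∀ B : LinearMap.BilinForm ℂ V, B.IsAlt → B.Nondegenerate → Even n := by
  intro n
  induction n using Nat.strong_induction_on with
  | _ n IH =>
    intro V _ _ _ hrank B halt hnd
    rcases Nat.eq_zero_or_pos n with h0 | hpos
    · simp [h0]
    have : 0 < Module.finrank ℂ V := hrank ▸ hpos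
    have : Nontrivial V := Module.nontrivial_of_finrank_pos this
    obtain ⟨x, hx⟩ := exists_ne (0 : V)
    have hex : ∃ y, B x y ≠ 0 := by
      by_contra hc
      push_neg at hc
      exact hx (hnd.1 x hc)
    obtain ⟨y, hxy⟩ := hex
    have hli : LinearIndependent ℂ ![x, y] := by
      rw [LinearIndependent.pair_iff]
      intro s t hst
      have h1 : B (s • x + t • y) y = 0 := by rw [hst]; simp
      have h2 : B x (s • x + t • y) = 0 := by rw [hst]; simp
      simp only [map_add, _root_.map_smul, LinearMap.add_apply, LinearMap.smul_apply,
        smul_eq_mul] at h1 h2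
      have hs : s = 0 := by
        have h1' : s * B x y = 0 := by linear_combination h1 - t * halt y
        rcases mul_eq_zero.mp h1' with h | h
        · exact h
        · exact absurd h hxy
      have ht : t = 0 := by
        have h2' : t * B x y = 0 := by linear_combination h2 - s * halt x
        rcases mul_eq_zero.mp h2' with h | h
        · exact h
        · exact absurd h hxy
      exact ⟨hs, ht⟩
    set W : Submodule ℂ V := Submodule.span ℂ {x, y} with hW
    have hxW : x ∈ W := Submodule.subset_span (Set.mem_insert x {y})
    have hyW : y ∈ W := Submodule.subset_span (Set.mem_insert_of_mem x rfl)
    have hWrank : Module.finrank ℂ W = 2 := by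
      have hr : Set.range ![x, y] = {x, y} := by
        simp [Matrix.range_cons, Matrix.range_empty, Set.pair_comm]
      rw [hW, ← hr, finrank_span_eq_card hli, Fintype.card_fin]
    have hrefl : B.IsRefl := halt.isRefl
    have hndW : (B.restrict W).Nondegenerate := by
      refine (LinearMap.IsRefl.nondegenerate_iff_separatingLeft (B := B.restrict W) (fun u v => hrefl u v)).mpr ?_
      rintro ⟨v, hv⟩ hall
      obtain ⟨a, b, hab⟩ := Submodule.mem_span_pair.mp hv
      have h1 := hall ⟨x, hxW⟩
      have h2 := hall ⟨y, hyW⟩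
      simp only [LinearMap.BilinForm.restrict_apply, domRestrict_apply] at h1 h2
      rw [← hab] at h1 h2
      simp only [map_add, _root_.map_smul, LinearMap.add_apply, LinearMap.smul_apply,
        smul_eq_mul] at h1 h2
      have hyx : B y x ≠ 0 := fun hc => hxy (by rw [← hrefl y x hc])
      have hb : b = 0 := by
        have h1' : b * B y x = 0 := by linear_combination h1 - a * halt x
        rcases mul_eq_zero.mp h1' with h | h
        · exact h
        · exact absurd h hyx
      have ha : a = 0 := by
        have h2' : a * B x y = 0 := by linear_combination h2 - b * halt y
        rcases mul_eq_zero.mp h2' with h | h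
        · exact h
        · exact absurd h hxy
      simp [ha, hb, ← hab]
    have hcompl : IsCompl W (B.orthogonal W) :=
      (LinearMap.BilinForm.restrict_nondegenerate_iff_isCompl_orthogonal hrefl).mp hndW
    set U := B.orthogonal W with hU
    have hndU : (B.restrict U).Nondegenerate := by
      apply B.nondegenerate_restrict_of_disjoint_orthogonal hrefl
      rw [hU, LinearMap.BilinForm.orthogonal_orthogonal hnd hrefl]
      exact hcompl.disjoint.symm
    have haltU : (B.restrict U).IsAlt := fun u => halt u
    have hsum : Module.finrank ℂ W + Module.finrank ℂ U = n := by
      rw [Submodule.finrank_add_eq_of_isCompl hcompl, hrank]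
    have hlt : Module.finrank ℂ U < n := by omega
    have hevenU : Even (Module.finrank ℂ U) :=
      IH _ hlt U rfl (B.restrict U) haltU hndU
    have : n = 2 + Module.finrank ℂ U := by omega
    rw [this]
    exact (even_two).add hevenU

lemma skew_rank_even {n : ℕ} (A : Matrix (Fin n) (Fin n) ℂ) (hA : Aᵀ = -A) :
    Even A.rank := by
  classical
  set K := LinearMap.ker A.mulVecLin with hK
  obtain ⟨U, hc⟩ := Submodule.exists_isCompl K
  set B := Matrix.toBilin' A with hB
  have happly : ∀ v w, B v w = v ⬝ᵥ A *ᵥ w := fun v w => Matrix.toBilin'_apply' A v w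
  have halt : B.IsAlt := by
    intro v
    have h2 : B v v = -(B v v) := by
      rw [happly]
      conv_lhs => rw [Matrix.dotProduct_mulVec, ← Matrix.mulVec_transpose, hA,
        Matrix.neg_mulVec]
      rw [neg_dotProduct, dotProduct_comm]
    have h3 : (2 : ℂ) * B v v = 0 := by linear_combination h2
    simpa using mul_eq_zero.mp h3
  have hrefl : B.IsRefl := halt.isRefl
  have hndU : (B.restrict U).Nondegenerate := by
    refine (LinearMap.IsRefl.nondegenerate_iff_separatingLeft (B := B.restrict U) (fun u v => hrefl u v)).mpr ?_
    rintro ⟨u, hu⟩ hall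
    have hBu : ∀ w, B u w = 0 := by
      intro w
      have hw : w ∈ K ⊔ U := by rw [hc.sup_eq_top]; trivial
      obtain ⟨p, hp, q, hq, rfl⟩ := Submodule.mem_sup.mp hw
      have hp0 : A *ᵥ p = 0 := hp
      have h1 : B u p = 0 := by rw [happly, hp0, dotProduct_zero]
      have h2 : B u q = 0 := by
        have := hall ⟨q, hq⟩
        simpa [LinearMap.BilinForm.restrict_apply] using this
      rw [map_add, h1, h2, add_zero]
    have huK : u ∈ K := by
      show A.mulVecLin u = 0
      rw [Matrix.mulVecLin_apply]
      funext i
      have := hrefl u (Pi.single i 1) (hBu (Pi.single i 1))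
      rw [happly] at this
      simpa using this
    have : u ∈ K ⊓ U := ⟨huK, hu⟩
    rw [hc.inf_eq_bot] at this
    simpa using this
  have hrank : A.rank = Module.finrank ℂ U := by
    have h1 : A.rank + Module.finrank ℂ K = n := by
      have := LinearMap.finrank_range_add_finrank_ker A.mulVecLin
      simpa [Matrix.rank, hK] using this
    have h2 : Module.finrank ℂ K + Module.finrank ℂ U = n := by
      have := Submodule.finrank_add_eq_of_isCompl hc
      simpa using this
    omega
  rw [hrank]
  exact alt_nondeg_even _ U rfl (B.restrict U) (fun v => halt v) hndU

lemma matrix_eq_zero_of_mulVec {n : ℕ} (A : Matrix (Fin n) (Fin n) ℂ)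
    (h : ∀ v, A *ᵥ v = 0) : A = 0 := by
  ext i j
  have := congrFun (h (Pi.single j 1)) i
  simpa [Matrix.mulVec_single] using this

lemma eval_det_affine {n : ℕ} (A B : Matrix (Fin n) (Fin n) ℂ) (z : ℂ) :
    Polynomial.eval z
      (Matrix.det (A.map Polynomial.C + (Polynomial.X : Polynomial ℂ) • B.map Polynomial.C))
      = (A + z • B).det := by
  rw [← Polynomial.coe_evalRingHom, RingHom.map_det]
  congr 1
  ext i j
  simp only [RingHom.mapMatrix_apply, Matrix.map_apply, Matrix.add_apply, Matrix.smul_apply,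
    smul_eq_mul, Polynomial.coe_evalRingHom, Polynomial.eval_add, Polynomial.eval_mul,
    Polynomial.eval_C, Polynomial.eval_X]

end Helpers

theorem stmt_7 (l : ℂ) (hl0 : l ≠ 0) (hl1 : l ≠ 1)
    (Ax Ay Az : Matrix (Fin 6) (Fin 6) ℂ)
    (hAx : Axᵀ = -Ax) (hAy : Ayᵀ = -Ay) (hAz : Azᵀ = -Az)
    (h : ∀ x y z : ℂ, (x • Ax + y • Ay + z • Az).det =
        (y * z^2 - x * (x - y) * (x - l * y))^2) :
    IsUnit Ax ∧ (Ax⁻¹ * Az)^3 = 0 ∧ (Ax⁻¹ * Az)^2 ≠ 0 := by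
  have hdetAx : Ax.det = 1 := by
    have := h 1 0 0
    simp only [one_smul, zero_smul, add_zero] at this
    rw [this]; ring
  have hAxU : IsUnit Ax := (Matrix.isUnit_iff_isUnit_det Ax).mpr (by rw [hdetAx]; exact isUnit_one)
  set M := Ax⁻¹ * Az with hM
  have hAxinv : Ax * Ax⁻¹ = 1 := Matrix.mul_nonsing_inv Ax (by rw [hdetAx]; exact isUnit_one)
  have hinvAx : Ax⁻¹ * Ax = 1 := Matrix.nonsing_inv_mul Ax (by rw [hdetAx]; exact isUnit_one)
  have hdetAxinv : IsUnit (Ax⁻¹).det := by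
    have hmul : Ax⁻¹.det * Ax.det = 1 := by rw [← Matrix.det_mul, hinvAx, Matrix.det_one]
    exact IsUnit.of_mul_eq_one _ hmul
  have hAz' : Az = Ax * M := by rw [hM, ← Matrix.mul_assoc, hAxinv, Matrix.one_mul]
  -- charpoly and M^6 = 0
  have hdet1 : ∀ x : ℂ, (x • (1 : Matrix (Fin 6) (Fin 6) ℂ) - M).det = x ^ 6 := by
    intro x
    have hfac : Ax * (x • (1 : Matrix (Fin 6) (Fin 6) ℂ) - M)
        = x • Ax + (0:ℂ) • Ay + (-1:ℂ) • Az := by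
      rw [mul_sub, mul_smul_comm, mul_one, hM, ← Matrix.mul_assoc, hAxinv, Matrix.one_mul]
      module
    have h2 := congrArg Matrix.det hfac
    rw [Matrix.det_mul, hdetAx, one_mul, h x 0 (-1)] at h2
    rw [h2]; ring
  have hcp : M.charpoly = Polynomial.X ^ 6 := by
    apply Polynomial.funext
    intro x
    rw [Polynomial.eval_pow, Polynomial.eval_X]
    have hev : M.charpoly.eval x = (x • (1 : Matrix (Fin 6) (Fin 6) ℂ) - M).det := by
      rw [Matrix.charpoly, ← Polynomial.coe_evalRingHom, RingHom.map_det]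
      congr 1
      ext i j
      by_cases hij : i = j
      · subst hij
        simp [Matrix.charmatrix_apply_eq, Matrix.one_apply, Matrix.sub_apply]
      · simp [Matrix.charmatrix_apply_ne _ _ _ hij, Matrix.one_apply, hij, Matrix.sub_apply]
    rw [hev, hdet1]
  have hM6 : M ^ 6 = 0 := by
    have := Matrix.aeval_self_charpoly M
    rwa [hcp, map_pow, Polynomial.aeval_X] at this
  -- skewness of Ax * M^k
  have hMT : Mᵀ = Az * Ax⁻¹ := by
    have hneg : (Axᵀ)⁻¹ = -Ax⁻¹ := by
      rw [hAx]
      exact Matrix.inv_eq_right_inv (by rw [neg_mul_neg, hAxinv])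
    rw [hM, Matrix.transpose_mul, Matrix.transpose_nonsing_inv, hneg, hAz]
    simp [neg_mul_neg]
  have hconj : ∀ k : ℕ, (Az * Ax⁻¹) ^ k * Ax = Ax * M ^ k := by
    intro k
    induction k with
    | zero => simp
    | succ k ih =>
      have hstep : Az * Ax⁻¹ * Ax = Az := by rw [Matrix.mul_assoc, hinvAx, Matrix.mul_one]
      calc (Az * Ax⁻¹) ^ (k+1) * Ax
          = (Az * Ax⁻¹) ^ k * (Az * Ax⁻¹ * Ax) := by rw [pow_succ, Matrix.mul_assoc]
        _ = (Az * Ax⁻¹) ^ k * Az := by rw [hstep]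
        _ = (Az * Ax⁻¹) ^ k * (Ax * M) := by congr 1
        _ = ((Az * Ax⁻¹) ^ k * Ax) * M := by rw [Matrix.mul_assoc]
        _ = Ax * M ^ k * M := by rw [ih]
        _ = Ax * M ^ (k+1) := by rw [Matrix.mul_assoc, ← pow_succ]
  have hskew : ∀ k : ℕ, (Ax * M ^ k)ᵀ = -(Ax * M ^ k) := by
    intro k
    rw [Matrix.transpose_mul, Matrix.transpose_pow, hMT, hAx, Matrix.mul_neg, hconj k]
  have hre : ∀ k : ℕ, Even ((M ^ k).rank) := by
    intro k
    have h1 : (Ax * M ^ k).rank = (M ^ k).rank :=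
      Matrix.rank_mul_eq_right_of_isUnit_det Ax _ (by rw [hdetAx]; exact isUnit_one)
    rw [← h1]
    exact skew_rank_even _ (hskew k)
  -- rank-nullity
  have hrk : ∀ A : Matrix (Fin 6) (Fin 6) ℂ,
      A.rank + Module.finrank ℂ (LinearMap.ker A.mulVecLin) = 6 := by
    intro A
    have := LinearMap.finrank_range_add_finrank_ker A.mulVecLin
    simpa [Matrix.rank] using this
  -- kernels of powers
  have hkermono : ∀ k : ℕ,
      LinearMap.ker ((M ^ k).mulVecLin) ≤ LinearMap.ker ((M ^ (k+1)).mulVecLin) := by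
    intro k v hv
    have hv' : (M ^ k) *ᵥ v = 0 := hv
    show (M ^ (k+1)).mulVecLin v = 0
    rw [Matrix.mulVecLin_apply, pow_succ', ← Matrix.mulVec_mulVec, hv', Matrix.mulVec_zero]
  set n1 := Module.finrank ℂ (LinearMap.ker ((M ^ 1).mulVecLin)) with hn1
  set n2 := Module.finrank ℂ (LinearMap.ker ((M ^ 2).mulVecLin)) with hn2
  set n3 := Module.finrank ℂ (LinearMap.ker ((M ^ 3).mulVecLin)) with hn3
  have hpar1 : n1 % 2 = 0 := by
    obtain ⟨c, hc⟩ := hre 1; have := hrk (M ^ 1); omega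
  have hpar2 : n2 % 2 = 0 := by
    obtain ⟨c, hc⟩ := hre 2; have := hrk (M ^ 2); omega
  have hpar3 : n3 % 2 = 0 := by
    obtain ⟨c, hc⟩ := hre 3; have := hrk (M ^ 3); omega
  have hle12 : n1 ≤ n2 := Submodule.finrank_mono (hkermono 1)
  have hle23 : n2 ≤ n3 := Submodule.finrank_mono (hkermono 2)
  -- M^3 = 0
  have hM3 : M ^ 3 = 0 := by
    by_contra h3
    -- n3 ≤ 5
    have hn3le : n3 ≤ 5 := by
      by_contra hgt
      have h6' : n3 = 6 := by
        have := hrk (M ^ 3); omega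
      have htop : LinearMap.ker ((M ^ 3).mulVecLin) = ⊤ := by
        apply Submodule.eq_top_of_finrank_eq
        have hV6 : Module.finrank ℂ (Fin 6 → ℂ) = 6 := by simp
        rw [hV6, ← hn3]
        omega
      apply h3
      apply matrix_eq_zero_of_mulVec
      intro v
      have hv : v ∈ LinearMap.ker ((M ^ 3).mulVecLin) := by rw [htop]; trivial
      simpa [Matrix.mulVecLin_apply] using hv
    -- n2 ≠ n3
    have hne23 : n2 ≠ n3 := by
      intro heq
      have hKeq : LinearMap.ker ((M ^ 2).mulVecLin) = LinearMap.ker ((M ^ 3).mulVecLin) :=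
        Submodule.eq_of_le_of_finrank_le (hkermono 2) (le_of_eq heq.symm)
      have hstep : ∀ w, M ^ 3 *ᵥ w = 0 → M ^ 2 *ᵥ w = 0 := by
        intro w hw
        have hw' : w ∈ LinearMap.ker ((M ^ 3).mulVecLin) := by
          simpa [Matrix.mulVecLin_apply] using hw
        rw [← hKeq] at hw'
        simpa [Matrix.mulVecLin_apply] using hw'
      apply h3
      apply matrix_eq_zero_of_mulVec
      intro v
      have h6v : M ^ 3 *ᵥ (M ^ 3 *ᵥ v) = 0 := by
        rw [Matrix.mulVec_mulVec, ← pow_add, show 3+3 = 6 from rfl, hM6, Matrix.zero_mulVec]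
      have h5v := hstep _ h6v
      rw [Matrix.mulVec_mulVec, ← pow_add, show 2+3 = 5 from rfl] at h5v
      have h5v' : M ^ 3 *ᵥ (M ^ 2 *ᵥ v) = 0 := by
        rw [Matrix.mulVec_mulVec, ← pow_add, show 3+2 = 5 from rfl]; exact h5v
      have h4v := hstep _ h5v'
      rw [Matrix.mulVec_mulVec, ← pow_add, show 2+2 = 4 from rfl] at h4v
      have h4v' : M ^ 3 *ᵥ (M *ᵥ v) = 0 := by
        rw [Matrix.mulVec_mulVec, ← pow_succ]; exact h4v
      have h3v := hstep _ h4v'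
      rw [Matrix.mulVec_mulVec, ← pow_succ] at h3v
      exact h3v
    -- n1 ≠ n2
    have hne12 : n1 ≠ n2 := by
      intro heq
      have hKeq : LinearMap.ker ((M ^ 1).mulVecLin) = LinearMap.ker ((M ^ 2).mulVecLin) :=
        Submodule.eq_of_le_of_finrank_le (hkermono 1) (le_of_eq heq.symm)
      have hstep : ∀ w, M ^ 2 *ᵥ w = 0 → M ^ 1 *ᵥ w = 0 := by
        intro w hw
        have hw' : w ∈ LinearMap.ker ((M ^ 2).mulVecLin) := by
          simpa [Matrix.mulVecLin_apply] using hw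
        rw [← hKeq] at hw'
        simpa [Matrix.mulVecLin_apply] using hw'
      have hzero : M = 0 := by
        apply matrix_eq_zero_of_mulVec
        intro v
        have h6v : M ^ 2 *ᵥ (M ^ 4 *ᵥ v) = 0 := by
          rw [Matrix.mulVec_mulVec, ← pow_add, show 2+4 = 6 from rfl, hM6, Matrix.zero_mulVec]
        have h5v := hstep _ h6v
        rw [Matrix.mulVec_mulVec, ← pow_add, show 1+4 = 5 from rfl] at h5v
        have h5v' : M ^ 2 *ᵥ (M ^ 3 *ᵥ v) = 0 := by
          rw [Matrix.mulVec_mulVec, ← pow_add, show 2+3 = 5 from rfl]; exact h5v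
        have h4v := hstep _ h5v'
        rw [Matrix.mulVec_mulVec, ← pow_add, show 1+3 = 4 from rfl] at h4v
        have h4v' : M ^ 2 *ᵥ (M ^ 2 *ᵥ v) = 0 := by
          rw [Matrix.mulVec_mulVec, ← pow_add, show 2+2 = 4 from rfl]; exact h4v
        have h3v := hstep _ h4v'
        rw [Matrix.mulVec_mulVec, ← pow_add, show 1+2 = 3 from rfl] at h3v
        have h3v' : M ^ 2 *ᵥ (M ^ 1 *ᵥ v) = 0 := by
          rw [Matrix.mulVec_mulVec, ← pow_add, show 2+1 = 3 from rfl]; exact h3v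
        have h2v := hstep _ h3v'
        rw [Matrix.mulVec_mulVec, ← pow_add, show 1+1 = 2 from rfl] at h2v
        have h1v := hstep _ h2v
        rw [pow_one] at h1v
        exact h1v
      apply h3
      rw [hzero]
      exact zero_pow (by norm_num)
    -- now n1 = 0
    have hn1zero : n1 = 0 := by omega
    have hKbot : LinearMap.ker ((M ^ 1).mulVecLin) = ⊥ := by
      rw [← Submodule.finrank_eq_zero]
      exact hn1zero
    have hinj : ∀ w, M ^ 1 *ᵥ w = 0 → w = 0 := by
      intro w hw
      have : w ∈ LinearMap.ker ((M ^ 1).mulVecLin) := by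
        simpa [Matrix.mulVecLin_apply] using hw
      rw [hKbot] at this
      simpa using this
    set v0 : Fin 6 → ℂ := Pi.single 0 1 with hv0
    have hv6 : M ^ 1 *ᵥ (M ^ 5 *ᵥ v0) = 0 := by
      rw [Matrix.mulVec_mulVec, ← pow_add, show 1+5 = 6 from rfl, hM6, Matrix.zero_mulVec]
    have hv5 := hinj _ hv6
    have hv5' : M ^ 1 *ᵥ (M ^ 4 *ᵥ v0) = 0 := by
      rw [Matrix.mulVec_mulVec, ← pow_add, show 1+4 = 5 from rfl]; exact hv5
    have hv4 := hinj _ hv5'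
    have hv4' : M ^ 1 *ᵥ (M ^ 3 *ᵥ v0) = 0 := by
      rw [Matrix.mulVec_mulVec, ← pow_add, show 1+3 = 4 from rfl]; exact hv4
    have hv3 := hinj _ hv4'
    have hv3' : M ^ 1 *ᵥ (M ^ 2 *ᵥ v0) = 0 := by
      rw [Matrix.mulVec_mulVec, ← pow_add, show 1+2 = 3 from rfl]; exact hv3
    have hv2 := hinj _ hv3'
    have hv2' : M ^ 1 *ᵥ (M ^ 1 *ᵥ v0) = 0 := by
      rw [Matrix.mulVec_mulVec, ← pow_add, show 1+1 = 2 from rfl]; exact hv2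
    have hv1 := hinj _ hv2'
    have hv0zero := hinj _ hv1
    have : (1 : ℂ) = 0 := by
      have := congrFun hv0zero 0
      simpa [hv0] using this
    exact one_ne_zero this
  -- M^2 ≠ 0
  have hM2 : M ^ 2 ≠ 0 := by
    intro hM2
    have hAzM : Az * M = 0 := by
      have hh : Az * M = Ax * M ^ 2 := by
        rw [hAz', Matrix.mul_assoc, ← pow_two]
      rw [hh, hM2, Matrix.mul_zero]
    have hsum := Matrix.rank_add_rank_le_card_of_mul_eq_zero hAzM
    rw [Fintype.card_fin] at hsum
    have hMAz : M.rank = Az.rank := by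
      rw [hM]
      exact Matrix.rank_mul_eq_right_of_isUnit_det Ax⁻¹ Az hdetAxinv
    have hkz := hrk Az
    set Kz := LinearMap.ker Az.mulVecLin with hKz
    have hp3 : 3 ≤ Module.finrank ℂ Kz := by omega
    obtain ⟨U, hc⟩ := Submodule.exists_isCompl Kz
    set p := Module.finrank ℂ Kz with hp
    set q := Module.finrank ℂ U with hq
    have hpq : p + q = 6 := by
      have := Submodule.finrank_add_eq_of_isCompl hc
      simpa using this
    let bK := Module.finBasis ℂ Kz
    let bU := Module.finBasis ℂ U
    let bV : Module.Basis (Fin p ⊕ Fin q) ℂ (Fin 6 → ℂ) :=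
      (bK.prod bU).map (Submodule.prodEquivOfIsCompl Kz U hc)
    let e : (Fin p ⊕ Fin q) ≃ Fin 6 := finSumFinEquiv.trans (finCongr hpq)
    let b : Module.Basis (Fin 6) ℂ (Fin 6 → ℂ) := bV.reindex e
    have hgood : ∀ i : Fin p, Az *ᵥ (b (e (Sum.inl i))) = 0 := by
      intro i
      have h1 : b (e (Sum.inl i)) = bV (Sum.inl i) := by simp [b]
      have h2 : bV (Sum.inl i) = ((bK i : Kz) : Fin 6 → ℂ) := by
        simp only [bV, Module.Basis.map_apply, Module.Basis.prod_apply, Sum.elim_inl,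
          Submodule.coe_prodEquivOfIsCompl']
        simp
      rw [h1, h2]
      have hmem : ((bK i : Kz) : Fin 6 → ℂ) ∈ LinearMap.ker Az.mulVecLin := (bK i).2
      rw [LinearMap.mem_ker, Matrix.mulVecLin_apply] at hmem
      exact hmem
    let Q : Matrix (Fin 6) (Fin 6) ℂ := (Pi.basisFun ℂ (Fin 6)).toMatrix ⇑b
    have hQinv : Invertible Q := (Pi.basisFun ℂ (Fin 6)).invertibleToMatrix b
    have hQdet : IsUnit Q.det := Matrix.isUnit_det_of_invertible Q
    have hQcol : ∀ i j, Q i j = b j i := by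
      intro i j
      simp [Q, Module.Basis.toMatrix_apply]
    have hAzQ : ∀ i j, (Az * Q) i j = (Az *ᵥ ⇑b j) i := by
      intro i j
      simp only [Matrix.mul_apply, Matrix.mulVec, dotProduct, hQcol]
    set D : Matrix (Fin 6) (Fin 6) (Polynomial ℂ) :=
      ((Ax + Ay) * Q).map Polynomial.C
        + (Polynomial.X : Polynomial ℂ) • ((Az * Q).map Polynomial.C) with hD
    have hDeval : ∀ z : ℂ, Polynomial.eval z D.det = ((Ax + Ay) + z • Az).det * Q.det := by
      intro z
      have hfac : ((Ax + Ay) + z • Az) * Q = (Ax + Ay) * Q + z • (Az * Q) := by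
        rw [Matrix.add_mul, Matrix.smul_mul]
      rw [hD, eval_det_affine, ← hfac, Matrix.det_mul]
    have hz4 : ∀ z : ℂ, ((Ax + Ay) + z • Az).det = z ^ 4 := by
      intro z
      have e1 := h 1 1 z
      simp only [one_smul] at e1
      rw [e1]; ring
    have hDX : D.det = Polynomial.C Q.det * Polynomial.X ^ 4 := by
      apply Polynomial.funext
      intro z
      rw [hDeval z, hz4, Polynomial.eval_mul, Polynomial.eval_C, Polynomial.eval_pow,
        Polynomial.eval_X]
      ring
    haveI hdec : ∀ j : Fin 6, Decidable (Az *ᵥ ⇑b j = 0) := fun _ => Classical.dec _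
    have hcard : (∑ j : Fin 6, (if Az *ᵥ ⇑b j = 0 then (0:ℕ) else 1)) ≤ 3 := by
      rw [← Equiv.sum_comp e (fun j => (if Az *ᵥ ⇑b j = 0 then (0:ℕ) else 1))]
      rw [Fintype.sum_sum_type]
      have hA : (∑ i : Fin p, (if Az *ᵥ ⇑b (e (Sum.inl i)) = 0 then (0:ℕ) else 1)) = 0 := by
        apply Finset.sum_eq_zero
        intro i _
        simp [hgood i]
      have hB : (∑ i : Fin q, (if Az *ᵥ ⇑b (e (Sum.inr i)) = 0 then (0:ℕ) else 1)) ≤ q := by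
        calc (∑ i : Fin q, (if Az *ᵥ ⇑b (e (Sum.inr i)) = 0 then (0:ℕ) else 1))
            ≤ ∑ _i : Fin q, 1 := Finset.sum_le_sum (fun i _ => by split <;> omega)
          _ = q := by simp
      rw [hA, zero_add]
      omega
    have hdeg : D.det.natDegree ≤ 3 := by
      rw [Matrix.det_apply]
      apply Polynomial.natDegree_sum_le_of_forall_le
      intro σ _
      have hterm : (Equiv.Perm.sign σ • ∏ i, D (σ i) i).natDegree
          ≤ (∏ i, D (σ i) i).natDegree := by
        rcases Int.units_eq_one_or (Equiv.Perm.sign σ) with hs | hs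
        · rw [hs, one_smul]
        · rw [hs, Units.neg_smul, one_smul, Polynomial.natDegree_neg]
      refine hterm.trans ?_
      refine (Polynomial.natDegree_prod_le _ _).trans ?_
      refine le_trans (Finset.sum_le_sum ?_) hcard
      intro j _
      have hDj : D (σ j) j = Polynomial.C (((Ax + Ay) * Q) (σ j) j)
          + Polynomial.X * Polynomial.C ((Az * Q) (σ j) j) := by
        rw [hD]
        simp only [Matrix.add_apply, Matrix.smul_apply, Matrix.map_apply, smul_eq_mul]
      by_cases hj : Az *ᵥ ⇑b j = 0
      · simp only [hj, if_true]
        have hzero : (Az * Q) (σ j) j = 0 := by rw [hAzQ, hj]; rfl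
        rw [hDj, hzero, map_zero, mul_zero, add_zero, Polynomial.natDegree_C]
      · simp only [hj, if_false]
        rw [hDj]
        refine (Polynomial.natDegree_add_le _ _).trans ?_
        simp only [Polynomial.natDegree_C, max_le_iff]
        exact ⟨by omega, (Polynomial.natDegree_mul_le).trans (by simp)⟩
    have hc4 : (Polynomial.C Q.det * Polynomial.X ^ 4).natDegree = 4 := by
      rw [Polynomial.natDegree_C_mul hQdet.ne_zero, Polynomial.natDegree_X_pow]
    rw [hDX, hc4] at hdeg
    omega
  exact ⟨hAxU, hM3, hM2⟩
end
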